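/- Tensor cut: if ⊩_B^L φ⊗ψ and φ⊎ψ ⊩_B^K χ, then ⊩_B^{L⊎K} χ. -/

import Mathlib

abbrev Atom := ℕ
abbrev ASeq := Multiset Atom × Atom
abbrev Box := Multiset ASeq
abbrev ARule := Multiset Box × Box × Atom
abbrev Base := Set ARule

/-- An atom `d` is persistent in `B` if there is a rule `⟨∅, S, d⟩ ∈ B` with `S` nonempty. -/
def Persistent (B : Base) (d : Atom) : Prop :=
  ∃ S : Box, S ≠ 0 ∧ ((0 : Multiset Box), S, d) ∈ B

/-- Atomic derivability in a base. -/
inductive Deriv (B : Base) : Multiset Atom → Atom → Prop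
  | ref (p : Atom) : Deriv B {p} p
  | app (S : Box) (p : Atom)
      (bc : List (Box × Multiset Atom))
      (dc : List (Atom × Multiset Atom))
      (hrule : ((↑(bc.map Prod.fst) : Multiset Box), S, p) ∈ B)
      (hpers : ∀ x ∈ dc, Persistent B x.1)
      (hbox : ∀ x ∈ bc, ∀ s ∈ x.1, Deriv B (x.2 + s.1) s.2)
      (hd : ∀ x ∈ dc, Deriv B x.2 x.1)
      (hS : ∀ s ∈ S, Deriv B ((↑(dc.map Prod.fst) : Multiset Atom) + s.1) s.2) :
      Deriv B ((bc.map Prod.snd).sum + (dc.map Prod.snd).sum) p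

/-- Formulas of intuitionistic linear logic. -/
inductive Fml : Type
  | atom : Atom → Fml
  | top : Fml
  | zero : Fml
  | one : Fml
  | limp : Fml → Fml → Fml
  | tens : Fml → Fml → Fml
  | wth : Fml → Fml → Fml
  | plus : Fml → Fml → Fml
  | bang : Fml → Fml
deriving DecidableEq

/-- The degree of a formula. -/
def deg : Fml → ℕ
  | .atom _ => 1
  | .top => 2
  | .zero => 2
  | .one => 2
  | .limp φ ψ => deg φ + deg ψ + 1
  | .tens φ ψ => deg φ + deg ψ + 1
  | .wth φ ψ => deg φ + deg ψ + 1
  | .plus φ ψ => deg φ + deg ψ + 1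
  | .bang φ => deg φ + 1

theorem one_le_deg (φ : Fml) : 1 ≤ deg φ := by
  cases φ <;> simp [deg] <;> omega

mutual
  /-- Support `⊩_B^L φ` (empty left-hand side). -/
  def Supp : Base → Multiset Atom → Fml → Prop
    | B, L, .atom p => Deriv B L p
    | _, _, .top => True
    | B, L, .zero => ∀ (K : Multiset Atom) (p : Atom), Supp B (L + K) (.atom p)
    | B, L, .one => ∀ C : Base, B ⊆ C → ∀ (K : Multiset Atom) (p : Atom),
        Supp C K (.atom p) → Supp C (L + K) (.atom p)
    | B, L, .limp φ ψ => SuppInf1 B L φ ψ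
    | B, L, .tens φ ψ => ∀ C : Base, B ⊆ C → ∀ (K : Multiset Atom) (p : Atom),
        SuppInf2 C K φ ψ (.atom p) → Supp C (L + K) (.atom p)
    | B, L, .wth φ ψ => Supp B L φ ∧ Supp B L ψ
    | B, L, .plus φ ψ => ∀ C : Base, B ⊆ C → ∀ (K : Multiset Atom) (p : Atom),
        SuppInf1 C K φ (.atom p) → SuppInf1 C K ψ (.atom p) → Supp C (L + K) (.atom p)
    | B, L, .bang φ => ∀ C : Base, B ⊆ C → ∀ (K : Multiset Atom) (p : Atom),
        (∀ D : Base, C ⊆ D → Supp D 0 φ → Supp D K (.atom p)) → Supp C (L + K) (.atom p)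
  termination_by B L φ => 2 * deg φ
  decreasing_by
    all_goals
      try simp only [deg]
      try have h1 := one_le_deg φ
      try have h2 := one_le_deg ψ
      try have h3 := one_le_deg χ
      try have h4 := one_le_deg α
      try have h5 := one_le_deg β
      omega

  /-- The (Inf) clause for a singleton context `{φ} ⊩_B^L χ`. -/
  def SuppInf1 : Base → Multiset Atom → Fml → Fml → Prop
    | B, L, .bang α, χ => ∀ C : Base, B ⊆ C → Supp C 0 α → Supp C L χ
    | B, L, φ, χ => ∀ C : Base, B ⊆ C → ∀ K : Multiset Atom,
        Supp C K φ → Supp C (L + K) χ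
  termination_by B L φ χ => 2 * (deg φ + deg χ) - 1
  decreasing_by
    all_goals
      try simp only [deg]
      try have h1 := one_le_deg φ
      try have h2 := one_le_deg ψ
      try have h3 := one_le_deg χ
      try have h4 := one_le_deg α
      try have h5 := one_le_deg β
      omega

  /-- The (Inf) clause for a two-element context `{φ, ψ} ⊩_B^L χ`. -/
  def SuppInf2 : Base → Multiset Atom → Fml → Fml → Fml → Prop
    | B, L, .bang α, .bang β, χ => ∀ C : Base, B ⊆ C →
        Supp C 0 α → Supp C 0 β → Supp C L χ
    | B, L, .bang α, ψ, χ => ∀ C : Base, B ⊆ C → ∀ K : Multiset Atom,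
        Supp C 0 α → Supp C K ψ → Supp C (L + K) χ
    | B, L, φ, .bang β, χ => ∀ C : Base, B ⊆ C → ∀ K : Multiset Atom,
        Supp C 0 β → Supp C K φ → Supp C (L + K) χ
    | B, L, φ, ψ, χ => ∀ C : Base, B ⊆ C → ∀ K₁ K₂ : Multiset Atom,
        Supp C K₁ φ → Supp C K₂ ψ → Supp C (L + K₁ + K₂) χ
  termination_by B L φ ψ χ => 2 * (deg φ + deg ψ + deg χ) - 1
  decreasing_by
    all_goals
      try simp only [deg]
      try have h1 := one_le_deg φ
      try have h2 := one_le_deg ψ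
      try have h3 := one_le_deg χ
      try have h4 := one_le_deg α
      try have h5 := one_le_deg β
      omega
end

/-- Is the formula a `!`-formula? -/
def isBang : Fml → Bool
  | .bang _ => true
  | _ => false

/-- Strip a top-level `!`. -/
def unbang : Fml → Fml
  | .bang φ => φ
  | φ => φ

/-- Support for a multiset of formulas: the `(⊎)` clause. -/
def SuppMS (B : Base) (L : Multiset Atom) (Γ : Multiset Fml) : Prop :=
  ∃ l : List (Fml × Multiset Atom), (↑(l.map Prod.fst) : Multiset Fml) = Γ ∧
    (l.map Prod.snd).sum = L ∧ ∀ x ∈ l, Supp B x.2 x.1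

/-- The official (Inf) clause: `Γ ⊩_B^L φ`, where `Γ = !Δ ⊎ Θ`. -/
def SuppSeq (B : Base) (L : Multiset Atom) (Γ : Multiset Fml) (φ : Fml) : Prop :=
  ∀ C : Base, B ⊆ C → ∀ K : Multiset Atom,
    SuppMS C 0 ((Γ.filter (fun ψ => isBang ψ = true)).map unbang) →
    SuppMS C K (Γ.filter (fun ψ => isBang ψ = false)) →
    Supp C (L + K) φ

/-- Validity of a sequent `(Γ : φ)`. -/
def Valid (Γ : Multiset Fml) (φ : Fml) : Prop :=
  ∀ B : Base, SuppSeq B 0 Γ φ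

/-!
Induction on `χ`, for all bases and resources at once. For an atom `p`, the sequent
`{φ, ψ} ⊩_B^K p` is exactly the premise of the (⊗) clause of `⊩_B^L φ ⊗ ψ`. The connectives
`0`, `1`, `⊗`, `⊕` and `!` are all defined by elimination into atoms: the premise of their clause,
pushed through `{φ, ψ} ⊩ χ` over an extension `C ⊇ B`, turns that sequent into `{φ, ψ} ⊩_C p`,
which is the atomic case again. For `&` and `⊸` the induction hypothesis applies to the
components, with support being monotone along base extensions.
-/

theorem Deriv.mono {B C : Base} (hBC : B ⊆ C) {L : Multiset Atom} {p : Atom}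
    (h : Deriv B L p) : Deriv C L p := by
  induction h with
  | ref p => exact .ref p
  | app S p bc dc hrule hpers _ _ _ ihbox ihd ihS =>
    exact .app S p bc dc (hBC hrule) (fun x hx => (hpers x hx).imp fun _ hS => ⟨hS.1, hBC hS.2⟩)
      ihbox ihd ihS

theorem SuppInf1.mono {B C : Base} (hBC : B ⊆ C) {L : Multiset Atom} {φ χ : Fml}
    (h : SuppInf1 B L φ χ) : SuppInf1 C L φ χ := by
  cases φ <;> simp only [SuppInf1] at h ⊢ <;> exact fun D hCD => h D (hBC.trans hCD)

theorem SuppInf2.mono {B C : Base} (hBC : B ⊆ C) {L : Multiset Atom} {φ ψ χ : Fml}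
    (h : SuppInf2 B L φ ψ χ) : SuppInf2 C L φ ψ χ := by
  cases φ <;> cases ψ <;> simp only [SuppInf2] at h ⊢ <;> exact fun D hCD => h D (hBC.trans hCD)

theorem Supp.mono {B C : Base} (hBC : B ⊆ C) {L : Multiset Atom} {φ : Fml}
    (h : Supp B L φ) : Supp C L φ := by
  induction φ generalizing L with
  | atom p => rw [Supp] at h ⊢; exact h.mono hBC
  | top => rw [Supp]; trivial
  | zero => simp only [Supp] at h ⊢; exact fun K p => (h K p).mono hBC
  | limp α β => rw [Supp] at h ⊢; exact h.mono hBC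
  | wth α β ihα ihβ => rw [Supp] at h ⊢; exact ⟨ihα h.1, ihβ h.2⟩
  | one | tens | plus | bang => rw [Supp] at h ⊢; exact fun D hCD => h D (hBC.trans hCD)

theorem suppMS_zero (B : Base) : SuppMS B 0 0 := ⟨[], rfl, rfl, by simp⟩

theorem SuppMS.singleton {B : Base} {L : Multiset Atom} {φ : Fml} (h : Supp B L φ) :
    SuppMS B L {φ} :=
  ⟨[(φ, L)], rfl, by simp, by simpa using h⟩

theorem SuppMS.pair {B : Base} {L₁ L₂ : Multiset Atom} {φ₁ φ₂ : Fml}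
    (h₁ : Supp B L₁ φ₁) (h₂ : Supp B L₂ φ₂) : SuppMS B (L₁ + L₂) {φ₁, φ₂} :=
  ⟨[(φ₁, L₁), (φ₂, L₂)], rfl, by simp, by simp [h₁, h₂]⟩

theorem isBang_bang (α : Fml) : isBang (.bang α) = true := rfl

@[simp] theorem unbang_bang (α : Fml) : unbang (.bang α) = α := rfl

theorem isBang_eq_false {φ : Fml} (h : ∀ α, φ = .bang α → False) : isBang φ = false := by
  cases φ <;> first | rfl | exact (h _ rfl).elim

theorem SuppSeq.suppInf2 {B : Base} {L : Multiset Atom} {φ ψ χ : Fml}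
    (h : SuppSeq B L {φ, ψ} χ) : SuppInf2 B L φ ψ χ := by
  simp only [SuppSeq, Multiset.insert_eq_cons, Multiset.filter_cons, Multiset.filter_singleton] at h
  rw [SuppInf2.eq_def]
  split
  · intro C hBC hα hβ
    simp only [isBang_bang, if_true] at h
    simpa using h C hBC 0 (.pair hα hβ) (suppMS_zero C)
  · rename_i hψ
    simp only [isBang_bang, isBang_eq_false hψ, if_true] at h
    intro C hBC K hα hψ'
    simpa using h C hBC K (.singleton hα) (.singleton hψ')
  · rename_i hφ
    simp only [isBang_bang, isBang_eq_false hφ, if_true] at h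
    intro C hBC K hβ hφ'
    simpa using h C hBC K (.singleton hβ) (.singleton hφ')
  · rename_i hφ hψ _
    simp only [isBang_eq_false hφ, isBang_eq_false hψ, if_true] at h
    intro C hBC K₁ K₂ h₁ h₂
    simpa [add_assoc] using h C hBC _ (suppMS_zero C) (.pair h₁ h₂)

theorem SuppSeq.imp_add {B C : Base} {K K₀ : Multiset Atom} {Γ : Multiset Fml} {χ χ' : Fml}
    (h : SuppSeq B K Γ χ) (hBC : B ⊆ C)
    (hχ : ∀ D, C ⊆ D → ∀ M, Supp D M χ → Supp D (M + K₀) χ') :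
    SuppSeq C (K + K₀) Γ χ' := by
  intro D hCD M hbang hrest
  rw [add_right_comm]
  exact hχ D hCD _ (h D (hBC.trans hCD) M hbang hrest)

theorem SuppSeq.imp {B C : Base} {K : Multiset Atom} {Γ : Multiset Fml} {χ χ' : Fml}
    (h : SuppSeq B K Γ χ) (hBC : B ⊆ C) (hχ : ∀ D, C ⊆ D → ∀ M, Supp D M χ → Supp D M χ') :
    SuppSeq C K Γ χ' := by
  simpa using h.imp_add hBC (K₀ := 0) (by simpa using hχ)

theorem tensor_cut_atom_of_imp {B C : Base} {L K K₀ : Multiset Atom} {φ ψ χ : Fml} {p : Atom}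
    (h₁ : Supp B L (.tens φ ψ)) (h₂ : SuppSeq B K {φ, ψ} χ) (hBC : B ⊆ C)
    (hχ : ∀ D, C ⊆ D → ∀ M, Supp D M χ → Supp D (M + K₀) (.atom p)) :
    Supp C (L + K + K₀) (.atom p) := by
  rw [Supp] at h₁
  rw [add_assoc]
  exact h₁ C hBC _ p (h₂.imp_add hBC hχ).suppInf2

theorem tensor_cut_limp {B : Base} {L K : Multiset Atom} {φ ψ α β : Fml}
    (ih : ∀ {B : Base} {L K : Multiset Atom},
      Supp B L (.tens φ ψ) → SuppSeq B K {φ, ψ} β → Supp B (L + K) β)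
    (h₁ : Supp B L (.tens φ ψ)) (h₂ : SuppSeq B K {φ, ψ} (.limp α β)) :
    Supp B (L + K) (.limp α β) := by
  rw [Supp, SuppInf1.eq_def]
  split
  · intro C hBC hα
    refine ih (h₁.mono hBC) (h₂.imp hBC fun D hCD M h => ?_)
    rw [Supp, SuppInf1] at h
    exact h D subset_rfl (hα.mono hCD)
  · rename_i hα
    intro C hBC K₀ hα'
    rw [add_assoc]
    refine ih (h₁.mono hBC) (h₂.imp_add hBC fun D hCD M h => ?_)
    rw [Supp, SuppInf1.eq_2 _ _ _ _ hα] at h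
    exact h D subset_rfl K₀ (hα'.mono hCD)

theorem tensor_cut (B : Base) (L K : Multiset Atom) (φ ψ χ : Fml)
    (h1 : Supp B L (.tens φ ψ)) (h2 : SuppSeq B K {φ, ψ} χ) :
    Supp B (L + K) χ := by
  induction χ generalizing B L K with
  | atom p => rw [Supp] at h1; exact h1 B subset_rfl K p h2.suppInf2
  | top => rw [Supp]; trivial
  | zero =>
    rw [Supp]
    exact fun K₀ p => tensor_cut_atom_of_imp h1 h2 subset_rfl fun D _ M h => by
      rw [Supp] at h; exact h K₀ p
  | one =>
    rw [Supp]
    exact fun C hBC K₀ p hp => tensor_cut_atom_of_imp h1 h2 hBC fun D hCD M h => by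
      rw [Supp] at h; exact h D subset_rfl K₀ p (hp.mono hCD)
  | limp α β _ ih => exact tensor_cut_limp (ih _ _ _) h1 h2
  | tens α β =>
    rw [Supp]
    exact fun C hBC K₀ p hp => tensor_cut_atom_of_imp h1 h2 hBC fun D hCD M h => by
      rw [Supp] at h; exact h D subset_rfl K₀ p (hp.mono hCD)
  | wth α β ihα ihβ =>
    rw [Supp]
    exact ⟨ihα B L K h1 (h2.imp subset_rfl fun D _ M h => by rw [Supp] at h; exact h.1),
      ihβ B L K h1 (h2.imp subset_rfl fun D _ M h => by rw [Supp] at h; exact h.2)⟩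
  | plus α β =>
    rw [Supp]
    exact fun C hBC K₀ p hα hβ => tensor_cut_atom_of_imp h1 h2 hBC fun D hCD M h => by
      rw [Supp] at h; exact h D subset_rfl K₀ p (hα.mono hCD) (hβ.mono hCD)
  | bang α =>
    rw [Supp]
    exact fun C hBC K₀ p hp => tensor_cut_atom_of_imp h1 h2 hBC fun D hCD M h => by
      rw [Supp] at h; exact h D subset_rfl K₀ p fun E hDE => hp E (hCD.trans hDE)
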